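/- arXiv:1607.05887 — 3 statements merged into one kernel-verified Lean document; each statement's English description precedes it below -/
import Mathlib

section
/- Let A, B be integers with Aλ + Bm = 1 and set z := y^A · f(x)^B ∈ F^×. Then the divisor of z is P₁ + ⋯ + P_r − rP_∞; explicitly: v_{P_i}(z) = 1 for every place P_i lying over (x − α_i)𝔽_q[x] (1 ≤ i ≤ r), v_Q(z) = 0 for every finite place Q of F not lying over any (x − α_i)𝔽_q[x], and v_{P_∞}(z) = −r for every infinite place P_∞ of F. -/
/-!
Let `w` be the valuation of `𝔽_q(x)` below a place `P` of `F`. On `𝔽_q(x)` one has `v_P = e·w`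
with `0 < e ≤ m = [F : 𝔽_q(x)]`: otherwise suitable powers of a uniformizer at `P` would have
valuations pairwise distinct modulo `e`, giving too many elements linearly independent over
`𝔽_q(x)`. Below a finite place this is the ramification formula for Dedekind extensions; at
infinity it follows from `O_∞ ⊆ S`, which makes `v_P` nonnegative wherever `w` is.

Since `Aλ + Bm = 1`, `z^m = f`, so `m·v_P(z) = e·w(f)`. Over `αᵢ` we have `w(f) = 1` and at
infinity `w(f) = -r`; both are prime to `m`, which forces `e = m` and `v_P(z) = w(f)`. At the
other finite places `f` is a unit, so `v_P(z) = 0`.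
-/

set_option synthInstance.maxHeartbeats 1000000
set_option maxHeartbeats 1000000

noncomputable section

open Polynomial IsDedekindDomain

/-- The valuation ring at infinity of `𝔽_q(x)`: rational functions `g/h` with
`deg g ≤ deg h`. -/
def Oinfty (Fq : Type*) [Field Fq] : ValuationSubring (RatFunc Fq) :=
  letI := Classical.decEq (RatFunc Fq)
  (FunctionField.inftyValuation Fq).valuationSubring

section Places

variable {R S F : Type*} [CommRing R] [IsDedekindDomain R] [CommRing S] [IsDedekindDomain S]
  [Field F] [Algebra R F] [IsFractionRing R F] [Algebra S F] [IsFractionRing S F]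

/-- The multiplicative valuation attached to a place of `F` (a height-one prime of the
finite-part ring `R` or of the infinite-part ring `S`). -/
def placeVal : HeightOneSpectrum R ⊕ HeightOneSpectrum S → F → WithZero (Multiplicative ℤ)
  | .inl v, h => v.valuation F h
  | .inr v, h => v.valuation F h

/-- `v_P(h) = n` for a place `P` of `F` (the valuation is written multiplicatively,
so this reads `placeVal P h = ofAdd (-n)`). -/
def pvEq (P : HeightOneSpectrum R ⊕ HeightOneSpectrum S) (h : F) (n : ℤ) : Prop :=
  placeVal P h =
    ((Multiplicative.ofAdd (-n) : Multiplicative ℤ) : WithZero (Multiplicative ℤ))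

/-- The Weierstrass semigroup `H(Q₁, …, Q_l)`: `s ∈ H(Q₁, …, Q_l)` iff there is a nonzero
`h ∈ F` with `v_{Q i}(h) = -(s i)` for all `i` and `v_P(h) ≥ 0` for every other place `P`. -/
def WSemigroup {ι : Type*} (Q : ι → HeightOneSpectrum R ⊕ HeightOneSpectrum S)
    (s : ι → ℕ) : Prop :=
  ∃ h : F, h ≠ 0 ∧ (∀ i, pvEq (Q i) h (-(s i : ℤ))) ∧
    ∀ P : HeightOneSpectrum R ⊕ HeightOneSpectrum S, (∀ i, P ≠ Q i) → placeVal P h ≤ 1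

/-- The minimal generating set `Γ(Q₁, …, Q_l)`: tuples `n` of positive integers that are,
for some `i`, minimal (componentwise) in `{p ∈ H(Q₁, …, Q_l) : p i = n i}`. -/
def WGamma {l : ℕ} (Q : Fin l → HeightOneSpectrum R ⊕ HeightOneSpectrum S)
    (n : Fin l → ℕ) : Prop :=
  (∀ i, 0 < n i) ∧
    ∃ i, Minimal (fun s : Fin l → ℕ => WSemigroup (F := F) Q s ∧ s i = n i) n

end Places

open Module WithZero

theorem zpow_mul_zpow_pow_eq_of_pow_eq_pow {G₀ : Type*} [CommGroupWithZero G₀] {y f : G₀}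
    (hf : f ≠ 0) {m l : ℕ} (hy : y ^ m = f ^ l) {A B : ℤ} (hAB : A * l + B * m = 1) :
    (y ^ A * f ^ B) ^ m = f := by
  calc (y ^ A * f ^ B) ^ m = (y ^ m) ^ A * f ^ (B * m) := by
        rw [mul_pow, ← zpow_natCast, ← zpow_natCast, ← zpow_natCast, ← zpow_mul, ← zpow_mul,
          ← zpow_mul, mul_comm A]
    _ = f ^ (A * l + B * m) := by rw [hy, ← zpow_natCast, ← zpow_mul, zpow_add₀ hf, mul_comm A]
    _ = f := by rw [hAB, zpow_one]

theorem Ideal.comap_eq_span_singleton_of_mem {A R : Type*} [CommRing A] [CommRing R]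
    (φ : A →+* R) {Q : Ideal R} [Q.IsPrime] {a : A} (ha : (Ideal.span {a}).IsMaximal)
    (h : φ a ∈ Q) : Q.comap φ = Ideal.span {a} :=
  (ha.eq_of_le (Ideal.IsPrime.comap φ).ne_top
    ((Ideal.span_singleton_le_iff_mem _).2 (Ideal.mem_comap.2 h))).symm

theorem Valuation.linearIndependent_of_map_smul_injective {K F Γ₀ ι : Type*} [Field K] [Field F]
    [Algebra K F] [LinearOrderedCommGroupWithZero Γ₀] [Fintype ι] (v : Valuation F Γ₀)
    {x : ι → F} (hx : ∀ i, x i ≠ 0)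
    (hv : ∀ i j (a b : K), a ≠ 0 → b ≠ 0 → v (a • x i) = v (b • x j) → i = j) :
    LinearIndependent K x := by
  classical
  rw [Fintype.linearIndependent_iff]
  by_contra! ⟨g, hg, i₀, hi₀⟩
  set s := Finset.univ.filter (g · ≠ 0)
  obtain ⟨j, hj, hmax⟩ :=
    s.exists_max_image (fun i => v (g i • x i)) ⟨i₀, Finset.mem_filter.2 ⟨Finset.mem_univ _, hi₀⟩⟩
  have hgj : g j ≠ 0 := (Finset.mem_filter.1 hj).2
  have hlt : ∀ i ∈ s \ {j}, v (g i • x i) < v (g j • x j) := by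
    intro i hi
    obtain ⟨his, hij⟩ := Finset.mem_sdiff.1 hi
    exact (hmax i his).lt_of_ne fun h =>
      hij (Finset.mem_singleton.2 (hv i j _ _ (Finset.mem_filter.1 his).2 hgj h))
  have hsum : ∑ i ∈ s, g i • x i = 0 := by
    rw [Finset.sum_filter_of_ne fun i _ => mt fun hgi => by rw [hgi, zero_smul], hg]
  have hval := v.map_sum_eq_of_lt hj hlt
  rw [hsum, v.map_zero, eq_comm, Valuation.zero_iff] at hval
  exact smul_ne_zero hgj (hx j) hval

section Ramification

variable {K F : Type*} [Field K] [Field F] [Algebra K F]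

theorem Valuation.linearIndependent_pow_of_map_algebraMap_eq_pow {v : Valuation F ℤᵐ⁰}
    {w : Valuation K ℤᵐ⁰} {e : ℕ} (hvw : ∀ g : K, g ≠ 0 → v (algebraMap K F g) = w g ^ e)
    {π : F} (hπ : v π = exp (-1)) {N : ℕ} (hN : ∀ i j : Fin N, (e : ℤ) ∣ i - j → i = j) :
    LinearIndependent K fun i : Fin N => π ^ (i : ℕ) := by
  have hπ0 : π ≠ 0 := v.ne_zero_iff.1 (by rw [hπ]; exact exp_ne_zero)
  have hval (a : K) (ha : a ≠ 0) (i : ℕ) : v (a • π ^ i) = exp (e * log (w a) - i) := by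
    rw [Algebra.smul_def, map_mul, hvw a ha, map_pow, hπ, ← exp_log ((w.ne_zero_iff).2 ha),
      ← exp_nsmul, ← exp_nsmul, ← exp_add, log_exp]
    simp [sub_eq_add_neg]
  refine v.linearIndependent_of_map_smul_injective (fun i => pow_ne_zero _ hπ0)
    fun i j a b ha hb h => hN i j ⟨log (w a) - log (w b), ?_⟩
  rw [hval a ha, hval b hb, exp_inj] at h
  linear_combination -h

variable [FiniteDimensional K F]

theorem Valuation.pos_of_map_algebraMap_eq_pow {v : Valuation F ℤᵐ⁰} {w : Valuation K ℤᵐ⁰}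
    {e : ℕ} (hvw : ∀ g : K, g ≠ 0 → v (algebraMap K F g) = w g ^ e) {π : F}
    (hπ : v π = exp (-1)) : 0 < e := by
  refine Nat.pos_of_ne_zero fun he => ?_
  subst he
  have := (Valuation.linearIndependent_pow_of_map_algebraMap_eq_pow hvw hπ
    (N := finrank K F + 1) fun i j hij => Fin.ext (by simp at hij; omega)).fintype_card_le_finrank
  simp at this

theorem Valuation.le_finrank_of_map_algebraMap_eq_pow {v : Valuation F ℤᵐ⁰}
    {w : Valuation K ℤᵐ⁰} {e : ℕ} (hvw : ∀ g : K, g ≠ 0 → v (algebraMap K F g) = w g ^ e)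
    {π : F} (hπ : v π = exp (-1)) : e ≤ finrank K F := by
  have := (Valuation.linearIndependent_pow_of_map_algebraMap_eq_pow hvw hπ (N := e)
    fun i j hij => Fin.ext (by
      have := Int.eq_zero_of_abs_lt_dvd hij (by rw [abs_lt]; omega)
      omega)).fintype_card_le_finrank
  simpa using this

theorem Valuation.map_eq_exp_of_pow_finrank_eq {v : Valuation F ℤᵐ⁰} {w : Valuation K ℤᵐ⁰}
    {e : ℕ} (hvw : ∀ g : K, g ≠ 0 → v (algebraMap K F g) = w g ^ e) {π : F}
    (hπ : v π = exp (-1)) {z : F} {f : K} {k : ℤ} (hz : z ^ finrank K F = algebraMap K F f)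
    (hf : w f = exp k) (hk : IsCoprime (finrank K F : ℤ) k) : v z = exp k := by
  have he0 := Valuation.pos_of_map_algebraMap_eq_pow hvw hπ
  have hen := Valuation.le_finrank_of_map_algebraMap_eq_pow hvw hπ
  have hf0 : f ≠ 0 := w.ne_zero_iff.1 (by rw [hf]; exact exp_ne_zero)
  have hz0 : z ≠ 0 := by
    rintro rfl
    rw [zero_pow (by omega), eq_comm, map_eq_zero_iff _ (algebraMap K F).injective] at hz
    exact hf0 hz
  obtain ⟨a, ha⟩ : ∃ a, v z = exp a := ⟨log (v z), (exp_log (v.ne_zero_iff.2 hz0)).symm⟩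
  have hna : (finrank K F : ℤ) * a = e * k := by
    have := congrArg v hz
    rwa [map_pow, ha, hvw f hf0, hf, ← exp_nsmul, ← exp_nsmul, exp_inj, nsmul_eq_mul,
      nsmul_eq_mul] at this
  obtain rfl : e = finrank K F := le_antisymm hen <| Nat.le_of_dvd he0 <|
    Int.natCast_dvd_natCast.1 (hk.dvd_of_dvd_mul_right ⟨a, hna.symm⟩)
  rw [ha, exp_inj]
  exact mul_left_cancel₀ (by omega) hna

end Ramification

theorem Valuation.exists_map_eq_pow_of_le_one {K : Type*} [Field K] {w v : Valuation K ℤᵐ⁰}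
    (h : ∀ x, w x ≤ 1 → v x ≤ 1) {ϖ : K} (hϖ : w ϖ = exp (-1)) :
    ∃ e : ℕ, ∀ x, x ≠ 0 → v x = w x ^ e := by
  have hϖ0 : ϖ ≠ 0 := w.ne_zero_iff.1 (by rw [hϖ]; exact exp_ne_zero)
  have hvϖ : v ϖ ≠ 0 := v.ne_zero_iff.2 hϖ0
  obtain ⟨e, he⟩ : ∃ e : ℕ, v ϖ = exp (-(e : ℤ)) := by
    have : log (v ϖ) ≤ 0 :=
      (log_le_iff_le_exp hvϖ).2 (h ϖ (by rw [hϖ, ← exp_zero, exp_le_exp]; norm_num))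
    exact ⟨(-log (v ϖ)).toNat, by rw [Int.toNat_of_nonneg (by omega), neg_neg, exp_log hvϖ]⟩
  refine ⟨e, fun x hx => ?_⟩
  obtain ⟨a, ha⟩ : ∃ a, w x = exp a := ⟨log (w x), (exp_log (w.ne_zero_iff.2 hx)).symm⟩
  set u := x * ϖ ^ a
  have hwu : w u = 1 := by simp [u, ha, hϖ, ← exp_zsmul]
  have hvu : v u = 1 := le_antisymm (h u hwu.le) <| by
    have := h u⁻¹ (by rw [map_inv₀, hwu, inv_one])
    rwa [map_inv₀, inv_le_one₀ (zero_lt_iff.2 (v.ne_zero_iff.2 fun h0 => by simp [h0] at hwu))]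
      at this
  have hxu : x = u * ϖ ^ (-a) := by
    rw [mul_assoc, ← zpow_add₀ hϖ0, add_neg_cancel, zpow_zero, mul_one]
  calc v x = v (u * ϖ ^ (-a)) := congrArg v hxu
    _ = exp (-(e : ℤ)) ^ (-a) := by rw [map_mul, hvu, one_mul, map_zpow₀, he]
    _ = w x ^ e := by
      rw [ha, ← exp_zsmul, ← exp_nsmul, exp_inj, smul_eq_mul, nsmul_eq_mul]
      ring

theorem IsDedekindDomain.HeightOneSpectrum.valuation_eq_one_of_pow_eq {B F : Type*} [CommRing B]
    [IsDedekindDomain B] [Field F] [Algebra B F] [IsFractionRing B F] (P : HeightOneSpectrum B)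
    {b : B} (hb : b ∉ P.asIdeal) {n : ℕ} (hn : n ≠ 0) {z : F} (hz : z ^ n = algebraMap B F b) :
    P.valuation F z = 1 := by
  rw [← pow_eq_one_iff_left hn, ← map_pow, hz, valuation_of_algebraMap,
    intValuation_eq_one_iff.2 hb]

theorem IsDedekindDomain.HeightOneSpectrum.valuation_eq_exp_neg_one_of_pow_finrank_eq
    {A K B F : Type*} [CommRing A] [IsDedekindDomain A] [CommRing B] [IsDedekindDomain B]
    [Algebra A B] [Module.IsTorsionFree A B] [Algebra.IsIntegral A B] [Field K] [Field F]
    [Algebra K F] [FiniteDimensional K F] [Algebra A K] [IsFractionRing A K] [Algebra A F]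
    [IsScalarTower A K F] [Algebra B F] [IsFractionRing B F] [IsScalarTower A B F]
    (P : HeightOneSpectrum B) {a : A} (ha : (P.under A).intValuation a = exp (-1)) {z : F}
    (hz : z ^ finrank K F = algebraMap A F a) : P.valuation F z = exp (-1) := by
  have : P.asIdeal.LiesOver (P.under A).asIdeal := ⟨rfl⟩
  exact Valuation.map_eq_exp_of_pow_finrank_eq (w := (P.under A).valuation K)
    (fun g _ => (valuation_liesOver F (P.under A) P g).symm)
    (P.valuation_exists_uniformizer F).choose_spec
    (by rw [hz, IsScalarTower.algebraMap_apply A K F]) (by rw [valuation_of_algebraMap, ha])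
    isCoprime_one_right.neg_right

theorem IsDedekindDomain.HeightOneSpectrum.intValuation_X_sub_C_of_ne {k : Type*} [Field k]
    {q : HeightOneSpectrum k[X]} {a b : k} (hq : q.asIdeal = Ideal.span {X - C a}) (hb : b ≠ a) :
    q.intValuation (X - C b) = 1 := by
  rwa [intValuation_eq_one_iff, hq, Ideal.mem_span_singleton, dvd_iff_isRoot, root_X_sub_C]

theorem IsDedekindDomain.HeightOneSpectrum.intValuation_prod_X_sub_C {k ι : Type*} [Field k]
    [Fintype ι] {α : ι → k} (hα : Function.Injective α) {q : HeightOneSpectrum k[X]} {i : ι}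
    (hq : q.asIdeal = Ideal.span {X - C (α i)}) :
    q.intValuation (∏ j, (X - C (α j))) = exp (-1) := by
  rw [map_prod, Finset.prod_eq_single i
    (fun j _ hji => intValuation_X_sub_C_of_ne hq (hα.ne hji)) (by simp),
    intValuation_singleton _ (X_sub_C_ne_zero _) hq]

theorem IsDedekindDomain.HeightOneSpectrum.valuation_eq_exp_natDegree_of_pow_finrank_eq
    {Fq F : Type*} [Field Fq] [Field F] [Algebra (RatFunc Fq) F] [FiniteDimensional (RatFunc Fq) F]
    [Algebra (Oinfty Fq) F] [IsScalarTower (Oinfty Fq) (RatFunc Fq) F]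
    [IsDedekindDomain (integralClosure (Oinfty Fq) F)]
    [IsFractionRing (integralClosure (Oinfty Fq) F) F]
    (P : HeightOneSpectrum (integralClosure (Oinfty Fq) F)) {f : Fq[X]} (hf0 : f ≠ 0)
    (hf : IsCoprime (finrank (RatFunc Fq) F : ℤ) f.natDegree) {z : F}
    (hz : z ^ finrank (RatFunc Fq) F =
      algebraMap (RatFunc Fq) F (algebraMap Fq[X] (RatFunc Fq) f)) :
    P.valuation F z = exp (f.natDegree : ℤ) := by
  classical
  have hle (x : RatFunc Fq) (hx : RatFunc.inftyValuation Fq x ≤ 1) :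
      P.valuation F (algebraMap (RatFunc Fq) F x) ≤ 1 := by
    have : algebraMap (RatFunc Fq) F x = algebraMap (integralClosure (Oinfty Fq) F) F
        (algebraMap (Oinfty Fq) _ ⟨x, hx⟩) := by
      rw [← IsScalarTower.algebraMap_apply,
        IsScalarTower.algebraMap_apply (Oinfty Fq) (RatFunc Fq) F]
      rfl
    rw [this]
    exact P.valuation_le_one _
  obtain ⟨e, hvw⟩ := Valuation.exists_map_eq_pow_of_le_one
    (v := (P.valuation F).comap (algebraMap (RatFunc Fq) F)) hle (ϖ := RatFunc.X⁻¹) (by simp)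
  exact Valuation.map_eq_exp_of_pow_finrank_eq (v := P.valuation F) hvw
    (P.valuation_exists_uniformizer F).choose_spec hz
    (RatFunc.inftyValuation.polynomial Fq hf0) hf

theorem divisor_of_z_general
    (Fq F : Type*) [Field Fq] [Field F]
    (m r lam : ℕ) (hm : 2 ≤ m)
    (hmrl : Nat.Coprime m (r * lam))
    (α : Fin r → Fq) (hα : Function.Injective α)
    [Algebra (RatFunc Fq) F] [Algebra (Polynomial Fq) F]
    [IsScalarTower (Polynomial Fq) (RatFunc Fq) F]
    (y : F)
    (hy : y ^ m = algebraMap (RatFunc Fq) F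
      (algebraMap (Polynomial Fq) (RatFunc Fq) ((∏ i, (X - C (α i))) ^ lam)))
    (hdeg : Module.finrank (RatFunc Fq) F = m)
    [IsDedekindDomain ↥(integralClosure (Polynomial Fq) F)]
    [IsFractionRing ↥(integralClosure (Polynomial Fq) F) F]
    [Algebra ↥(Oinfty Fq) F] [IsScalarTower ↥(Oinfty Fq) (RatFunc Fq) F]
    [IsDedekindDomain ↥(integralClosure ↥(Oinfty Fq) F)]
    [IsFractionRing ↥(integralClosure ↥(Oinfty Fq) F) F]
    (A B : ℤ) (hAB : A * (lam : ℤ) + B * (m : ℤ) = 1) :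
    ∀ z : F,
      z = y ^ A * (algebraMap (RatFunc Fq) F
        (algebraMap (Polynomial Fq) (RatFunc Fq) (∏ i, (X - C (α i))))) ^ B →
      (∀ i : Fin r, ∀ P : HeightOneSpectrum ↥(integralClosure (Polynomial Fq) F), (P).asIdeal.comap (algebraMap (Polynomial Fq) ↥(integralClosure (Polynomial Fq) F)) = Ideal.span {X - C (α i)} →
          P.valuation F z = ((Multiplicative.ofAdd (-1 : ℤ) : Multiplicative ℤ) :
            WithZero (Multiplicative ℤ))) ∧
      (∀ Q : HeightOneSpectrum ↥(integralClosure (Polynomial Fq) F),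
          (∀ i : Fin r, ¬ ((Q).asIdeal.comap (algebraMap (Polynomial Fq) ↥(integralClosure (Polynomial Fq) F)) = Ideal.span {X - C (α i)})) → Q.valuation F z = 1) ∧
      (∀ P : HeightOneSpectrum ↥(integralClosure ↥(Oinfty Fq) F),
          P.valuation F z = ((Multiplicative.ofAdd ((r : ℤ)) : Multiplicative ℤ) :
            WithZero (Multiplicative ℤ))) := by
  intro z hzdef
  set f : Fq[X] := ∏ i, (X - C (α i))
  have hf0 : f ≠ 0 := Finset.prod_ne_zero_iff.2 fun i _ => X_sub_C_ne_zero (α i)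
  have hn : finrank (RatFunc Fq) F ≠ 0 := by omega
  have : FiniteDimensional (RatFunc Fq) F := .of_finrank_pos (Nat.pos_of_ne_zero hn)
  have : Module.IsTorsionFree Fq[X] F := Module.isTorsionFree_iff_algebraMap_injective.2 <| by
    rw [IsScalarTower.algebraMap_eq Fq[X] (RatFunc Fq) F]
    exact (algebraMap (RatFunc Fq) F).injective.comp (IsFractionRing.injective _ _)
  have hzK : z ^ finrank (RatFunc Fq) F =
      algebraMap (RatFunc Fq) F (algebraMap Fq[X] (RatFunc Fq) f) := by
    rw [hdeg, hzdef]
    exact zpow_mul_zpow_pow_eq_of_pow_eq_pow (by simpa using hf0) (by rw [hy, map_pow, map_pow])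
      hAB
  have hz : z ^ finrank (RatFunc Fq) F = algebraMap Fq[X] F f := by
    rw [hzK, ← IsScalarTower.algebraMap_apply]
  refine ⟨fun i P hP => P.valuation_eq_exp_neg_one_of_pow_finrank_eq
    (HeightOneSpectrum.intValuation_prod_X_sub_C hα hP) hz, fun Q hQ => ?_, fun P => ?_⟩
  · refine Q.valuation_eq_one_of_pow_eq (b := algebraMap Fq[X] _ f) ?_ hn
      (by rw [hz, IsScalarTower.algebraMap_apply Fq[X] (integralClosure Fq[X] F) F])
    rw [map_prod, Ideal.IsPrime.prod_mem_iff]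
    rintro ⟨j, -, hj⟩
    exact hQ j (Ideal.comap_eq_span_singleton_of_mem _
      (PrincipalIdealRing.isMaximal_of_irreducible (irreducible_X_sub_C _)) hj)
  · have hdegf : f.natDegree = r := by simp [f]
    have hcop : IsCoprime (finrank (RatFunc Fq) F : ℤ) f.natDegree := by
      rw [hdeg, hdegf, Nat.isCoprime_iff_coprime]
      exact hmrl.coprime_mul_right_right
    rw [← hdegf]
    exact P.valuation_eq_exp_natDegree_of_pow_finrank_eq hf0 hcop hzK

theorem divisor_of_z
    (Fq F : Type*) [Field Fq] [Fintype Fq] [Field F]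
    (p : ℕ) (hp : p.Prime) [CharP Fq p]
    (m r lam : ℕ) (hm : 2 ≤ m) (hr : 2 < r) (hlam : 1 ≤ lam)
    (hmp : Nat.Coprime m p) (hmrl : Nat.Coprime m (r * lam))
    (α : Fin r → Fq) (hα : Function.Injective α)
    [Algebra (RatFunc Fq) F] [Algebra (Polynomial Fq) F]
    [IsScalarTower (Polynomial Fq) (RatFunc Fq) F]
    (y : F)
    (hy : y ^ m = algebraMap (RatFunc Fq) F
      (algebraMap (Polynomial Fq) (RatFunc Fq) ((∏ i, (X - C (α i))) ^ lam)))
    (hdeg : Module.finrank (RatFunc Fq) F = m)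
    (hgen : Algebra.adjoin (RatFunc Fq) ({y} : Set F) = ⊤)
    [IsDedekindDomain ↥(integralClosure (Polynomial Fq) F)]
    [IsFractionRing ↥(integralClosure (Polynomial Fq) F) F]
    [Algebra ↥(Oinfty Fq) F] [IsScalarTower ↥(Oinfty Fq) (RatFunc Fq) F]
    [IsDedekindDomain ↥(integralClosure ↥(Oinfty Fq) F)]
    [IsFractionRing ↥(integralClosure ↥(Oinfty Fq) F) F]
    (A B : ℤ) (hAB : A * (lam : ℤ) + B * (m : ℤ) = 1) :
    ∀ z : F,
      z = y ^ A * (algebraMap (RatFunc Fq) F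
        (algebraMap (Polynomial Fq) (RatFunc Fq) (∏ i, (X - C (α i))))) ^ B →
      (∀ i : Fin r, ∀ P : HeightOneSpectrum ↥(integralClosure (Polynomial Fq) F), (P).asIdeal.comap (algebraMap (Polynomial Fq) ↥(integralClosure (Polynomial Fq) F)) = Ideal.span {X - C (α i)} →
          P.valuation F z = ((Multiplicative.ofAdd (-1 : ℤ) : Multiplicative ℤ) :
            WithZero (Multiplicative ℤ))) ∧
      (∀ Q : HeightOneSpectrum ↥(integralClosure (Polynomial Fq) F),
          (∀ i : Fin r, ¬ ((Q).asIdeal.comap (algebraMap (Polynomial Fq) ↥(integralClosure (Polynomial Fq) F)) = Ideal.span {X - C (α i)})) → Q.valuation F z = 1) ∧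
      (∀ P : HeightOneSpectrum ↥(integralClosure ↥(Oinfty Fq) F),
          P.valuation F z = ((Multiplicative.ofAdd ((r : ℤ)) : Multiplicative ℤ) :
            WithZero (Multiplicative ℤ))) :=
  divisor_of_z_general Fq F m r lam hm hmrl α hα y hy hdeg A B hAB
end
end

section
/- Let m ≥ 2 and r > 2 be integers with gcd(m, r) = 1. Then the set { m·k + j : j, k ∈ ℤ, 1 ≤ j ≤ m − 1 − ⌊m/r⌋, 0 ≤ k ≤ r − 2 − ⌊rj/m⌋ } ⊆ ℕ has cardinality (m − 1)(r − 1)/2; equivalently, Σ_{j=1}^{m−1−⌊m/r⌋} (r − 1 − ⌊rj/m⌋) = (m − 1)(r − 1)/2. -/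
lemma aux_not_dvd (m r : ℕ) (hcop : Nat.Coprime m r) {j : ℕ} (h1 : 1 ≤ j) (h2 : j < m) :
    ¬ m ∣ r * j := by
  intro h
  have hd : m ∣ j := hcop.dvd_of_dvd_mul_left h
  have := Nat.le_of_dvd (by omega) hd
  omega

lemma aux_pair (m r : ℕ) (hm : 0 < m) (hcop : Nat.Coprime m r) {j : ℕ}
    (h1 : 1 ≤ j) (h2 : j < m) :
    r * j / m + r * (m - j) / m = r - 1 := by
  have hb : r * (m - j) = r * m - r * j := by
    rw [Nat.mul_sub]
  have hab : r * j + r * (m - j) = r * m := by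
    have : r * j ≤ r * m := Nat.mul_le_mul_left _ (le_of_lt h2)
    omega
  have ha0 : r * j % m ≠ 0 := fun h => aux_not_dvd m r hcop h1 h2 (Nat.dvd_of_mod_eq_zero h)
  have hb0 : r * (m - j) % m ≠ 0 := fun h =>
    aux_not_dvd m r hcop (j := m - j) (by omega) (by omega) (Nat.dvd_of_mod_eq_zero h)
  have hsum : m ∣ r * j % m + r * (m - j) % m := by
    apply Nat.dvd_of_mod_eq_zero
    rw [← Nat.add_mod, hab, Nat.mul_mod_left]
  have h1m : r * j % m < m := Nat.mod_lt _ hm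
  have h2m : r * (m - j) % m < m := Nat.mod_lt _ hm
  have hsm : r * j % m + r * (m - j) % m = m := by
    obtain ⟨t, ht⟩ := hsum
    have ht2 : t < 2 := by
      by_contra hc
      have : m * 2 ≤ m * t := Nat.mul_le_mul_left _ (by omega)
      omega
    interval_cases t <;> omega
  have := Nat.add_div (a := r * j) (b := r * (m - j)) hm
  rw [hab, Nat.mul_div_cancel _ hm, hsm, if_pos (le_refl m)] at this
  generalize r * j / m = q1 at *
  generalize r * (m - j) / m = q2 at *
  omega

lemma aux_sum_two (m r : ℕ) (hm : 2 ≤ m) (hcop : Nat.Coprime m r) :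
    (∑ j ∈ Finset.Icc 1 (m - 1), r * j / m) * 2 = (m - 1) * (r - 1) := by
  have hrefl : (∑ j ∈ Finset.Icc 1 (m - 1), r * j / m)
      = ∑ j ∈ Finset.Icc 1 (m - 1), r * (m - j) / m := by
    have hIcc : Finset.Icc 1 (m - 1) = Finset.Ico 1 m := by
      rw [← Finset.Ico_add_one_right_eq_Icc]
      congr 1
      omega
    rw [hIcc, Finset.sum_Ico_eq_sum_range, Finset.sum_Ico_eq_sum_range,
      ← Finset.sum_range_reflect]
    apply Finset.sum_congr rfl
    intro i hi
    simp only [Finset.mem_range] at hi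
    have h : 1 + (m - 1 - 1 - i) = m - (1 + i) := by omega
    rw [h]
  have hsum : (∑ j ∈ Finset.Icc 1 (m - 1), r * j / m)
      + (∑ j ∈ Finset.Icc 1 (m - 1), r * (m - j) / m) = (m - 1) * (r - 1) := by
    rw [← Finset.sum_add_distrib]
    rw [Finset.sum_congr rfl (fun j hj => aux_pair m r (by omega) hcop
      (Finset.mem_Icc.mp hj).1 (by have := (Finset.mem_Icc.mp hj).2; omega))]
    rw [Finset.sum_const, Nat.card_Icc]
    have h : m - 1 + 1 - 1 = m - 1 := by omega
    rw [h, smul_eq_mul]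
  omega

lemma aux_le (m r : ℕ) (hm : 2 ≤ m) (hr : 2 < r) :
    ∀ j ∈ Finset.Icc 1 (m - 1), r * j / m ≤ r - 1 := by
  intro j hj
  simp only [Finset.mem_Icc] at hj
  have h : r * j / m < r := by
    rw [Nat.div_lt_iff_lt_mul (by omega)]
    calc r * j ≤ r * (m - 1) := Nat.mul_le_mul_left _ hj.2
      _ < r * m := (Nat.mul_lt_mul_left (show 0 < r by omega)).mpr (by omega)
  exact Nat.le_sub_one_of_lt h

lemma aux_sum_main (m r : ℕ) (hm : 2 ≤ m) (hr : 2 < r) (hcop : Nat.Coprime m r) :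
    (∑ j ∈ Finset.Icc 1 (m - 1 - m / r), (r - 1 - r * j / m)) * 2 = (m - 1) * (r - 1) := by
  have hext : ∑ j ∈ Finset.Icc 1 (m - 1 - m / r), (r - 1 - r * j / m)
      = ∑ j ∈ Finset.Icc 1 (m - 1), (r - 1 - r * j / m) := by
    apply Finset.sum_subset (Finset.Icc_subset_Icc_right (Nat.sub_le _ _))
    intro x hx hx2
    simp only [Finset.mem_Icc] at hx hx2
    have hxge : m - m / r ≤ x := by omega
    have h1 : r * (m - m / r) ≤ r * x := Nat.mul_le_mul_left _ hxge
    have h2 : r * (m - m / r) = r * m - r * (m / r) := Nat.mul_sub r m (m / r)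
    have h3 : r * (m / r) ≤ m := by rw [mul_comm]; exact Nat.div_mul_le_self m r
    have h4 : (r - 1) * m ≤ r * x := by
      have h6 : (r - 1) * m = r * m - 1 * m := Nat.sub_mul r 1 m
      omega
    exact Nat.sub_eq_zero_of_le ((Nat.le_div_iff_mul_le (by omega)).mpr h4)
  have hsplit : (∑ j ∈ Finset.Icc 1 (m - 1), (r - 1 - r * j / m))
      + (∑ j ∈ Finset.Icc 1 (m - 1), r * j / m) = (m - 1) * (r - 1) := by
    rw [← Finset.sum_add_distrib]
    rw [Finset.sum_congr rfl (fun j hj => Nat.sub_add_cancel (aux_le m r hm hr j hj))]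
    rw [Finset.sum_const, Nat.card_Icc]
    have h : m - 1 + 1 - 1 = m - 1 := by omega
    rw [h, smul_eq_mul]
  have h2 := aux_sum_two m r hm hcop
  rw [hext]
  omega

lemma aux_floor_nat (r m j : ℕ) : ⌊((r : ℚ) * ((j : ℕ) : ℚ)) / (m : ℚ)⌋ = ((r * j / m : ℕ) : ℤ) := by
  have h : ((r : ℚ) * (j : ℚ)) = ((r * j : ℕ) : ℚ) := by push_cast; ring
  rw [h, Rat.floor_natCast_div_natCast]
  exact (Int.natCast_div _ _).symm

lemma aux_floor_const (m r : ℕ) : ⌊(m : ℚ) / (r : ℚ)⌋ = ((m / r : ℕ) : ℤ) := by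
  rw [Rat.floor_natCast_div_natCast]
  exact (Int.natCast_div _ _).symm

lemma aux_floor_int (r m : ℕ) (j : ℤ) (hj : 0 ≤ j) :
    ⌊((r : ℚ) * ((j : ℤ) : ℚ)) / (m : ℚ)⌋ = ((r * j.toNat / m : ℕ) : ℤ) := by
  have h : ((j : ℤ) : ℚ) = ((j.toNat : ℕ) : ℚ) := by
    have := Int.toNat_of_nonneg hj
    exact_mod_cast (congrArg (Int.cast : ℤ → ℚ) this).symm
  rw [h]
  exact aux_floor_nat r m j.toNat

theorem gap_set_cardinality
    (m r : ℕ) (hm : 2 ≤ m) (hr : 2 < r) (hcop : Nat.Coprime m r) :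
    ({n : ℕ | ∃ j k : ℤ, 1 ≤ j ∧ j ≤ (m : ℤ) - 1 - ⌊(m : ℚ) / (r : ℚ)⌋ ∧
        0 ≤ k ∧ k ≤ (r : ℤ) - 2 - ⌊((r : ℚ) * (j : ℚ)) / (m : ℚ)⌋ ∧ (n : ℤ) = m * k + j}).ncard =
      (m - 1) * (r - 1) / 2 ∧
    ∑ j ∈ Finset.Icc 1 (m - 1 - m / r),
        ((r : ℤ) - 1 - ⌊((r : ℚ) * ((j : ℕ) : ℚ)) / (m : ℚ)⌋) =
      ((m : ℤ) - 1) * ((r : ℤ) - 1) / 2 := by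
  have hsum2 := aux_sum_main m r hm hr hcop
  have hpart2 : ∑ j ∈ Finset.Icc 1 (m - 1 - m / r),
      ((r : ℤ) - 1 - ⌊((r : ℚ) * ((j : ℕ) : ℚ)) / (m : ℚ)⌋)
      = ((∑ j ∈ Finset.Icc 1 (m - 1 - m / r), (r - 1 - r * j / m) : ℕ) : ℤ) := by
    rw [Nat.cast_sum]
    apply Finset.sum_congr rfl
    intro j hj
    rw [aux_floor_nat]
    have hle : r * j / m ≤ r - 1 :=
      aux_le m r hm hr j (Finset.Icc_subset_Icc_right (Nat.sub_le _ _) hj)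
    generalize r * j / m = q at *
    omega
  constructor
  · -- cardinality part
    classical
    set F : Finset ((_ : ℕ) × ℕ) :=
      (Finset.Icc 1 (m - 1 - m / r)).sigma (fun j => Finset.range (r - 1 - r * j / m)) with hF
    have hset : {n : ℕ | ∃ j k : ℤ, 1 ≤ j ∧ j ≤ (m : ℤ) - 1 - ⌊(m : ℚ) / (r : ℚ)⌋ ∧
        0 ≤ k ∧ k ≤ (r : ℤ) - 2 - ⌊((r : ℚ) * (j : ℚ)) / (m : ℚ)⌋ ∧ (n : ℤ) = m * k + j}
        = ↑(F.image (fun p => m * p.2 + p.1)) := by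
      ext n
      simp only [Set.mem_setOf_eq, Finset.coe_image, Set.mem_image, Finset.mem_coe, hF,
        Finset.mem_sigma, Finset.mem_Icc, Finset.mem_range]
      constructor
      · rintro ⟨j, k, hj1, hj2, hk1, hk2, hn⟩
        rw [aux_floor_const] at hj2
        rw [aux_floor_int r m j (by omega)] at hk2
        refine ⟨⟨j.toNat, k.toNat⟩, ⟨⟨?_, ?_⟩, ?_⟩, ?_⟩
        · show 1 ≤ j.toNat
          omega
        · show j.toNat ≤ m - 1 - m / r
          generalize m / r = d at hj2 ⊢
          omega
        · show k.toNat < r - 1 - r * j.toNat / m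
          generalize r * j.toNat / m = q at hk2 ⊢
          omega
        · show m * k.toNat + j.toNat = n
          have hk' : k = (k.toNat : ℤ) := (Int.toNat_of_nonneg hk1).symm
          have hj' : j = (j.toNat : ℤ) := (Int.toNat_of_nonneg (by omega)).symm
          rw [hk', hj'] at hn
          exact_mod_cast hn.symm
      · rintro ⟨⟨j, k⟩, ⟨⟨hj1, hj2⟩, hk⟩, hn⟩
        dsimp only at hj1 hj2 hk hn
        refine ⟨(j : ℤ), (k : ℤ), by exact_mod_cast hj1, ?_, Int.natCast_nonneg k, ?_, ?_⟩
        · rw [aux_floor_const]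
          generalize m / r = d at hj2 ⊢
          omega
        · rw [aux_floor_int r m (j : ℤ) (Int.natCast_nonneg j)]
          simp only [Int.toNat_natCast]
          generalize r * j / m = q at hk ⊢
          omega
        · push_cast [← hn]
          ring
    rw [hset, Set.ncard_coe_finset]
    have hinj : Set.InjOn (fun p : (_ : ℕ) × ℕ => m * p.2 + p.1) ↑F := by
      rintro ⟨j, k⟩ hjk ⟨j', k'⟩ hjk' heq
      simp only [hF, Finset.coe_sigma, Set.mem_sigma_iff, Finset.mem_coe, Finset.mem_Icc,
        Finset.mem_range] at hjk hjk'
      dsimp only at hjk hjk' heq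
      have hsub : m - 1 - m / r ≤ m - 1 := Nat.sub_le _ _
      have hjm : j < m := by obtain ⟨⟨h1, h2⟩, _⟩ := hjk; omega
      have hjm' : j' < m := by obtain ⟨⟨h1, h2⟩, _⟩ := hjk'; omega
      have e1 : j = j' := by
        have h1 : (m * k + j) % m = j := by
          rw [Nat.mul_add_mod]; exact Nat.mod_eq_of_lt hjm
        have h2 : (m * k' + j') % m = j' := by
          rw [Nat.mul_add_mod]; exact Nat.mod_eq_of_lt hjm'
        rw [← h1, ← h2, heq]
      subst e1
      have e2 : m * k = m * k' := by omega
      have e3 : k = k' := Nat.eq_of_mul_eq_mul_left (by omega) e2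
      subst e3
      rfl
    rw [Finset.card_image_of_injOn hinj, hF, Finset.card_sigma]
    simp only [Finset.card_range]
    generalize hP : (m - 1) * (r - 1) = P at *
    omega
  · rw [hpart2]
    have hcast : (((m - 1) * (r - 1) : ℕ) : ℤ) = ((m : ℤ) - 1) * ((r : ℤ) - 1) := by
      rw [Nat.cast_mul, Nat.cast_sub (by omega : 1 ≤ m), Nat.cast_sub (by omega : 1 ≤ r)]
      push_cast
      ring
    have h2 : ((∑ j ∈ Finset.Icc 1 (m - 1 - m / r), (r - 1 - r * j / m) : ℕ) : ℤ) * 2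
        = ((m : ℤ) - 1) * ((r : ℤ) - 1) := by
      rw [← hcast]
      exact_mod_cast congrArg (Nat.cast : ℕ → ℤ) hsum2
    generalize hP : ((m : ℤ) - 1) * ((r : ℤ) - 1) = P at *
    omega
end

section
/- Let m ≥ 2 and r > 2 be integers with gcd(m, r) = 1. Then the complement in ℕ₀ of the additive submonoid of ℕ₀ generated by m and r equals { m·k − r·j : j, k ∈ ℤ, 1 ≤ j ≤ m − 1 − ⌊m/r⌋, ⌈rj/m⌉ ≤ k ≤ r − 1 }. -/
theorem gaps_of_numerical_semigroup
    (m r : ℕ) (hm : 2 ≤ m) (hr : 2 < r) (hcop : Nat.Coprime m r) :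
    {n : ℕ | n ∉ AddSubmonoid.closure ({m, r} : Set ℕ)} =
    {n : ℕ | ∃ j k : ℤ, 1 ≤ j ∧ j ≤ (m : ℤ) - 1 - ⌊(m : ℚ) / (r : ℚ)⌋ ∧
        ⌈((r : ℚ) * (j : ℚ)) / (m : ℚ)⌉ ≤ k ∧ k ≤ (r : ℤ) - 1 ∧ (n : ℤ) = m * k - r * j} := by
  have hm0 : (0:ℤ) < (m:ℤ) := by exact_mod_cast Nat.lt_of_lt_of_le Nat.zero_lt_two hm
  have hr0 : (0:ℤ) < (r:ℤ) := by exact_mod_cast Nat.lt_of_le_of_lt (Nat.zero_le 2) hr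
  have hmQ : (0:ℚ) < (m:ℚ) := by exact_mod_cast hm0
  have hrQ : (0:ℚ) < (r:ℚ) := by exact_mod_cast hr0
  have hmem : ∀ n : ℕ, n ∈ AddSubmonoid.closure ({m, r} : Set ℕ) ↔
      ∃ a b : ℕ, a * m + b * r = n := by
    intro n
    rw [AddSubmonoid.mem_closure_pair]
    simp [smul_eq_mul]
  ext n
  simp only [Set.mem_setOf_eq, hmem]
  constructor
  · intro hn
    have hn1 : 1 ≤ n := by
      rcases Nat.eq_zero_or_pos n with h | h
      · exact absurd ⟨0, 0, by simp [h]⟩ hn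
      · exact h
    have hn1Z : (1:ℤ) ≤ (n:ℤ) := by exact_mod_cast hn1
    obtain ⟨A, B, hAB⟩ : ∃ A B : ℤ, (m:ℤ) * A + (r:ℤ) * B = 1 := by
      refine ⟨Nat.gcdA m r, Nat.gcdB m r, ?_⟩
      have h := Nat.gcd_eq_gcd_ab m r
      rw [hcop] at h
      exact_mod_cast h.symm
    set k : ℤ := ((n:ℤ) * A) % r with hkdef
    have hk0 : 0 ≤ k := Int.emod_nonneg _ (ne_of_gt hr0)
    have hkr : k < r := Int.emod_lt_of_pos _ hr0
    have hkeq : k = (n:ℤ) * A - r * (((n:ℤ) * A) / r) := by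
      rw [hkdef, Int.emod_def]
    have hdvd : (r:ℤ) ∣ (m:ℤ) * k - n := by
      refine ⟨-((n:ℤ) * B + m * (((n:ℤ) * A) / r)), ?_⟩
      rw [hkeq]
      linear_combination (n:ℤ) * hAB
    set j : ℤ := ((m:ℤ) * k - n) / r with hjdef
    have hj : (r:ℤ) * j = (m:ℤ) * k - n := Int.mul_ediv_cancel' hdvd
    have hnk : (n:ℤ) = m * k - r * j := by linarith
    have hj1 : 1 ≤ j := by
      by_contra hle
      push_neg at hle
      have hle' : j ≤ 0 := by omega
      apply hn
      refine ⟨k.toNat, (-j).toNat, ?_⟩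
      have hkc : ((k.toNat : ℤ)) = k := Int.toNat_of_nonneg hk0
      have hjc : (((-j).toNat : ℤ)) = -j := Int.toNat_of_nonneg (by omega)
      have : ((k.toNat : ℤ)) * m + ((-j).toNat : ℤ) * r = n := by
        rw [hkc, hjc]; linarith
      exact_mod_cast this
    have hceil : ⌈((r : ℚ) * (j : ℚ)) / (m : ℚ)⌉ ≤ k := by
      rw [Int.ceil_le, div_le_iff₀ hmQ]
      have hZ : (r:ℤ) * j ≤ k * m := by linarith
      exact_mod_cast hZ
    have hkmr : (m:ℤ) * k ≤ m * (r - 1) :=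
      mul_le_mul_of_nonneg_left (by omega) hm0.le
    have hfloor : ⌊(m : ℚ) / (r : ℚ)⌋ < (m:ℤ) - j := by
      rw [Int.floor_lt, div_lt_iff₀ hrQ]
      have hZ : (m:ℤ) < ((m:ℤ) - j) * r := by nlinarith
      exact_mod_cast hZ
    exact ⟨j, k, hj1, by omega, hceil, by omega, hnk⟩
  · rintro ⟨j, k, hj1, _, _, hk2, hnk⟩ ⟨a, b, hab⟩
    have habZ : (a:ℤ) * m + (b:ℤ) * r = (n:ℤ) := by exact_mod_cast hab
    have key : (m:ℤ) * (k - a) = r * (j + b) := by linear_combination -habZ - hnk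
    have hco : IsCoprime (m:ℤ) (r:ℤ) := by
      rw [Int.isCoprime_iff_gcd_eq_one, Int.gcd_natCast_natCast]
      exact hcop
    have hmdvd : (m:ℤ) ∣ (j + (b:ℤ)) :=
      hco.dvd_of_dvd_mul_left ⟨k - a, key.symm⟩
    obtain ⟨c, hc⟩ := hmdvd
    have hb0 : (0:ℤ) ≤ (b:ℤ) := Int.natCast_nonneg b
    have ha0 : (0:ℤ) ≤ (a:ℤ) := Int.natCast_nonneg a
    have hjb : 1 ≤ j + (b:ℤ) := by linarith
    have hc1 : 1 ≤ c := by nlinarith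
    have hka : k - (a:ℤ) = r * c := by
      have h2 : (m:ℤ) * (k - a) = m * (r * c) := by rw [key, hc]; ring
      exact mul_left_cancel₀ (ne_of_gt hm0) h2
    have hrc : (r:ℤ) ≤ r * c := le_mul_of_one_le_right hr0.le hc1
    linarith
end
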